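/- Let G be the learned feature set at the end of the first experiment and set δ = max over v ∈ S ∖ G of h(v; G), which is strictly positive. Then for every J > γ/(δ·n), the test accuracy of the warm-started model is strictly less than that of the cold-started model: ACC(L_warm^(J)) < ACC(L_cold^(J)). -/

import Mathlib

open Finset

/-- Number of data points in `N` whose feature set contains the feature `v`. -/
def featCount {F X : Type} [DecidableEq F] (feats : X → Finset F)
    (N : Finset X) (v : F) : ℕ :=
  (N.filter fun x => v ∈ feats x).card

/-- `g(v; T, N)`: the frequency of feature `v` among the data points of `N`,
normalized by the size of the full training set `T`. -/
noncomputable def gval {F X : Type} [DecidableEq F] (feats : X → Finset F)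
    (T N : Finset X) (v : F) : ℝ :=
  (featCount feats N v : ℝ) / (T.card : ℝ)

/-- The set of data points of `T` with nonzero gradient: not memorized (not in
`M`) and not well-classified by the learned set `L` (fewer than `τ` of their
features are learned). -/
def active {F X : Type} [DecidableEq F] [DecidableEq X] (feats : X → Finset F) (τ : ℕ)
    (L : Finset F) (M T : Finset X) : Finset X :=
  (T \ M).filter fun x => ((feats x) ∩ L).card < τ

/-- The learned set after the first `i` steps of a run `us` starting from `L0`. -/
def learnedAfter {F : Type} [DecidableEq F] (L0 : Finset F) (us : List F)
    (i : ℕ) : Finset F :=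
  L0 ∪ (us.take i).toFinset

/-- `us` is a valid greedy training run on the dataset `T` with initially
memorized set `M`, starting from the learned set `L0`; `S` is the set of all
features, `τ` the well-classification threshold and `γ` the noise strength.
At every step the model picks a not-yet-learned feature of maximal frequency
`g` among the active (nonzero-gradient) data points; it is learned if its
frequency is at least `γ/|T|`, and at the end of the run every remaining
unlearned feature has frequency below `γ/|T|` (the remaining active points are
then memorized). -/
structure IsRun {F X : Type} [DecidableEq F] [DecidableEq X] (S : Finset F)
    (feats : X → Finset F) (τ : ℕ) (γ : ℝ) (T M : Finset X)
    (L0 : Finset F) (us : List F) : Prop where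
  mem : ∀ i (h : i < us.length), us.get ⟨i, h⟩ ∈ S \ learnedAfter L0 us i
  maximal : ∀ i (h : i < us.length), ∀ u ∈ S \ learnedAfter L0 us i,
    gval feats T (active feats τ (learnedAfter L0 us i) M T) u ≤
      gval feats T (active feats τ (learnedAfter L0 us i) M T) (us.get ⟨i, h⟩)
  threshold : ∀ i (h : i < us.length),
    γ / (T.card : ℝ) ≤
      gval feats T (active feats τ (learnedAfter L0 us i) M T) (us.get ⟨i, h⟩)
  stopped : ∀ u ∈ S \ learnedAfter L0 us us.length,
    gval feats T (active feats τ (learnedAfter L0 us us.length) M T) u <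
      γ / (T.card : ℝ)

/-- The memorized set after a run: the previously memorized points together
with all points that are still active (not well-classified) at the end of the
run. -/
def finalM {F X : Type} [DecidableEq F] [DecidableEq X] (feats : X → Finset F) (τ : ℕ)
    (T M : Finset X) (L0 : Finset F) (us : List F) : Finset X :=
  M ∪ active feats τ (L0 ∪ us.toFinset) M T

/-- The cumulative dataset `T_{1:j}`, the union of the first `j` chunks. -/
def cumT {X : Type} [DecidableEq X] (chunk : ℕ → Finset X) (j : ℕ) : Finset X :=
  (Finset.Icc 1 j).biUnion chunk

/-- `h(v; L)`: the fraction of data points (of one chunk) containing `v` that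
are not well-classified by the learned set `L`. -/
noncomputable def hval {F : Type} [DecidableEq F] (C : ℕ) (Sc : Fin C → Finset F)
    (nA : Fin C → Finset F → ℕ) (τ n : ℕ) (v : F) (L : Finset F) : ℝ :=
  (1 / (n : ℝ)) * ∑ c : Fin C, ∑ A ∈ (Sc c).powerset,
    (nA c A : ℝ) * (if v ∈ A ∧ (A ∩ L).card < τ then 1 else 0)

/-- The test accuracy of a learned feature set `L`. -/
noncomputable def ACC {F : Type} [DecidableEq F] (C : ℕ) (Sc : Fin C → Finset F)
    (nA : Fin C → Finset F → ℕ) (τ n : ℕ) (L : Finset F) : ℝ :=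
  1 - ((C : ℝ) - 1) / (C : ℝ) * ((1 / (n : ℝ)) *
    ∑ c : Fin C, ∑ A ∈ (Sc c).powerset,
      (nA c A : ℝ) * (if (A ∩ L).card < τ then 1 else 0))


/-!
Every chunk has the same cell counts `n_A`, so on the cold run over `T_{1:J}` the score of `v`
is exactly `h(v; L)` and only the threshold `γ/(Jn)` depends on `J`. The warm model, having
memorised what `G` misclassifies, meets in chunk `j + 1` scores `h(v; G)/(j + 1)`, below its
threshold `γ/((j + 1)n)`: it never learns again, so `L_warm^(J) = G`.

Within a class `c`, `h(·; L)` depends only on `L ∩ S_c` and is injective, so the class-`c` picks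
of two greedy runs follow one chain and the run with the lower threshold learns more:
`G ⊆ L_cold^(J)`. The feature attaining `δ > γ/(Jn)` then forces some cell `A` with
`|A ∩ G| < τ ≤ |A ∩ L_cold^(J)|`, and this cell makes the accuracy strictly larger.
-/

section Cells

variable {C : ℕ} {F : Type}

def cellCount (Sc : Fin C → Finset F) (nA : Fin C → Finset F → ℕ)
    (p : Fin C → Finset F → Prop) [∀ c, DecidablePred (p c)] : ℕ :=
  ∑ c, ∑ A ∈ (Sc c).powerset.filter (p c), nA c A

variable {Sc : Fin C → Finset F} {nA : Fin C → Finset F → ℕ}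
  {p q : Fin C → Finset F → Prop} [∀ c, DecidablePred (p c)] [∀ c, DecidablePred (q c)]

theorem cellCount_le_cellCount (h : ∀ c, ∀ A ⊆ Sc c, p c A → q c A) :
    cellCount Sc nA p ≤ cellCount Sc nA q :=
  sum_le_sum fun c _ => sum_le_sum_of_subset fun A hA => by
    rw [mem_filter, mem_powerset] at hA ⊢
    exact ⟨hA.1, h c A hA.1 hA.2⟩

theorem cellCount_lt_cellCount (hnA : ∀ c, ∀ A ∈ (Sc c).powerset, 1 ≤ nA c A)
    (h : ∀ c, ∀ A ⊆ Sc c, p c A → q c A) (hpq : ∃ c, ∃ A ⊆ Sc c, q c A ∧ ¬p c A) :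
    cellCount Sc nA p < cellCount Sc nA q := by
  obtain ⟨c, A, hA, hq, hp⟩ := hpq
  refine sum_lt_sum (fun c _ => ?_) ⟨c, mem_univ c, ?_⟩
  · exact sum_le_sum_of_subset fun A hA => by
      rw [mem_filter, mem_powerset] at hA ⊢
      exact ⟨hA.1, h c A hA.1 hA.2⟩
  · refine sum_lt_sum_of_subset (fun A hA => ?_) (i := A) ?_ ?_ ?_ fun _ _ _ => Nat.zero_le _
    · rw [mem_filter, mem_powerset] at hA ⊢
      exact ⟨hA.1, h c A hA.1 hA.2⟩
    · exact mem_filter.mpr ⟨mem_powerset.mpr hA, hq⟩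
    · exact fun h => hp (mem_filter.mp h).2
    · exact hnA c A (mem_powerset.mpr hA)

theorem cellCount_congr (h : ∀ c, ∀ A ⊆ Sc c, p c A ↔ q c A) :
    cellCount Sc nA p = cellCount Sc nA q :=
  le_antisymm (cellCount_le_cellCount fun c A hA => (h c A hA).1)
    (cellCount_le_cellCount fun c A hA => (h c A hA).2)

variable [DecidableEq F]

theorem hval_eq_cellCount_div (τ n : ℕ) (v : F) (L : Finset F) :
    hval C Sc nA τ n v L =
      (cellCount Sc nA (fun _ A => v ∈ A ∧ (A ∩ L).card < τ) : ℝ) / n := by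
  simp [hval, cellCount, sum_filter, div_eq_inv_mul]

theorem ACC_eq_cellCount_div (τ n : ℕ) (L : Finset F) :
    ACC C Sc nA τ n L =
      1 - ((C : ℝ) - 1) / C * ((cellCount Sc nA (fun _ A => (A ∩ L).card < τ) : ℝ) / n) := by
  simp [ACC, cellCount, sum_filter, div_eq_inv_mul]

end Cells

theorem cumT_succ {X : Type} [DecidableEq X] (chunk : ℕ → Finset X) (j : ℕ) :
    cumT chunk (j + 1) = cumT chunk j ∪ chunk (j + 1) := by
  rw [cumT, cumT, ← insert_Icc_right_eq_Icc_add_one (by omega), biUnion_insert, union_comm]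

structure IsExpandingDataset {C : ℕ} {F X : Type} [DecidableEq F] (Sc : Fin C → Finset F)
    (label : X → Fin C) (feats : X → Finset F) (nA : Fin C → Finset F → ℕ)
    (chunk : ℕ → Finset X) (n : ℕ) : Prop where
  feats_subset : ∀ x, feats x ⊆ Sc (label x)
  disjoint : ∀ j j', j ≠ j' → Disjoint (chunk j) (chunk j')
  card_chunk : ∀ j, 1 ≤ j → (chunk j).card = n
  card_filter_cell : ∀ j, 1 ≤ j → ∀ c, ∀ A ∈ (Sc c).powerset,
    ((chunk j).filter fun x => label x = c ∧ feats x = A).card = nA c A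

namespace IsExpandingDataset

variable {C n τ : ℕ} {F X : Type} [DecidableEq F]
  {Sc : Fin C → Finset F} {label : X → Fin C} {feats : X → Finset F}
  {nA : Fin C → Finset F → ℕ} {chunk : ℕ → Finset X}

theorem card_filter_chunk (hD : IsExpandingDataset Sc label feats nA chunk n) {j : ℕ}
    (hj : 1 ≤ j) (p : Fin C → Finset F → Prop) [∀ c, DecidablePred (p c)] :
    ((chunk j).filter fun x => p (label x) (feats x)).card = cellCount Sc nA p := by
  rw [card_eq_sum_card_fiberwise (f := label) (t := univ) fun _ _ => mem_univ _]
  refine sum_congr rfl fun c _ => ?_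
  rw [card_eq_sum_card_fiberwise (f := feats) (t := (Sc c).powerset), sum_filter]
  · refine sum_congr rfl fun A hA => ?_
    rw [← hD.card_filter_cell j hj c A hA, filter_filter, filter_filter]
    split_ifs with hp
    · congr 1
      refine filter_congr fun x _ => ?_
      constructor
      · exact fun h => h.2
      · rintro ⟨rfl, rfl⟩
        exact ⟨hp, rfl, rfl⟩
    · refine card_eq_zero.mpr (filter_eq_empty_iff.mpr ?_)
      rintro x - ⟨hpx, rfl, rfl⟩
      exact hp hpx
  · intro x hx
    rw [mem_coe, mem_filter] at hx
    rw [mem_coe, mem_powerset, ← hx.2]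
    exact hD.feats_subset x

theorem cellCount_le (hD : IsExpandingDataset Sc label feats nA chunk n)
    (p : Fin C → Finset F → Prop) [∀ c, DecidablePred (p c)] : cellCount Sc nA p ≤ n := by
  rw [← hD.card_filter_chunk le_rfl p, ← hD.card_chunk 1 le_rfl]
  exact card_filter_le _ _

theorem featCount_filter_chunk (hD : IsExpandingDataset Sc label feats nA chunk n) {j : ℕ}
    (hj : 1 ≤ j) (L : Finset F) (v : F) :
    featCount feats ((chunk j).filter fun x => (feats x ∩ L).card < τ) v =
      cellCount Sc nA (fun _ A => v ∈ A ∧ (A ∩ L).card < τ) := by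
  rw [featCount, filter_filter, ← hD.card_filter_chunk hj]
  simp only [and_comm]

theorem gval_chunk (hD : IsExpandingDataset Sc label feats nA chunk n) (hτ : 0 < τ) {j : ℕ}
    (hj : 1 ≤ j) (v : F) : gval feats (chunk j) (chunk j) v = hval C Sc nA τ n v ∅ := by
  rw [gval, hD.card_chunk j hj, hval_eq_cellCount_div, ← featCount_filter_chunk hD hj]
  simp [hτ]

theorem exists_frequent_features
    (hD : IsExpandingDataset Sc label feats nA chunk n) (hτ : 0 < τ) {c : Fin C} {θ : ℝ}
    {v : Fin τ → F} (hv : Function.Injective v) (hvc : ∀ i, v i ∈ Sc c)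
    (hθ : ∀ i : Fin τ, (i : ℕ) + 1 < τ → θ ≤ gval feats (chunk 1) (chunk 1) (v i)) :
    ∃ R ⊆ Sc c, R.card = τ - 1 ∧ ∀ r ∈ R, θ ≤ hval C Sc nA τ n r ∅ := by
  refine ⟨univ.map ((Fin.castLEEmb (Nat.sub_le τ 1)).trans ⟨v, hv⟩), ?_, by simp, ?_⟩
  · intro r hr
    obtain ⟨k, -, rfl⟩ := mem_map.mp hr
    exact hvc _
  · intro r hr
    obtain ⟨k, -, rfl⟩ := mem_map.mp hr
    rw [← hD.gval_chunk hτ le_rfl]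
    exact hθ _ (by simp; omega)

variable [DecidableEq X]

theorem card_cumT (hD : IsExpandingDataset Sc label feats nA chunk n) (J : ℕ) :
    (cumT chunk J).card = J * n := by
  rw [cumT, card_biUnion fun i _ i' _ hne => hD.disjoint i i' hne,
    sum_congr rfl fun i hi => hD.card_chunk i (mem_Icc.mp hi).1]
  simp

theorem card_filter_cumT (hD : IsExpandingDataset Sc label feats nA chunk n) (J : ℕ)
    (p : Fin C → Finset F → Prop) [∀ c, DecidablePred (p c)] :
    ((cumT chunk J).filter fun x => p (label x) (feats x)).card = J * cellCount Sc nA p := by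
  rw [cumT, filter_biUnion, card_biUnion fun i _ i' _ hne =>
      disjoint_filter_filter (hD.disjoint i i' hne),
    sum_congr rfl fun i hi => hD.card_filter_chunk (mem_Icc.mp hi).1 p]
  simp

theorem disjoint_cumT (hD : IsExpandingDataset Sc label feats nA chunk n) (j : ℕ) :
    Disjoint (cumT chunk j) (chunk (j + 1)) :=
  (disjoint_biUnion_left _ _ _).mpr fun l hl => hD.disjoint _ _ (by rw [mem_Icc] at hl; omega)

theorem gval_active_cumT (hD : IsExpandingDataset Sc label feats nA chunk n) {J : ℕ}
    (hJ : 1 ≤ J) (L : Finset F) (v : F) :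
    gval feats (cumT chunk J) (active feats τ L ∅ (cumT chunk J)) v =
      hval C Sc nA τ n v L := by
  have hcount : featCount feats (active feats τ L ∅ (cumT chunk J)) v =
      J * cellCount Sc nA (fun _ A => v ∈ A ∧ (A ∩ L).card < τ) := by
    rw [featCount, active, sdiff_empty, filter_filter, ← hD.card_filter_cumT]
    simp only [and_comm]
  have hJ0 : (J : ℝ) ≠ 0 := by positivity
  rw [gval, hcount, hD.card_cumT, hval_eq_cellCount_div]
  push_cast
  exact mul_div_mul_left _ _ hJ0

end IsExpandingDataset

theorem List.prefix_of_forall_append_singleton {α : Type*} {l₁ l₂ : List α}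
    (h : ∀ q y, q ++ [y] <+: l₁ → q <+: l₂ → q ++ [y] <+: l₂) : l₁ <+: l₂ := by
  induction l₁ using List.reverseRecOn with
  | nil => exact List.nil_prefix
  | append_singleton q y ih =>
    exact h q y (List.prefix_refl _)
      (ih fun q' y' hq' => h q' y' (hq'.trans (List.prefix_append _ _)))

theorem List.exists_prefix_filter_eq {α : Type*} (P : α → Bool) {l q : List α} {y : α}
    (h : q ++ [y] <+: l.filter P) : ∃ p, p ++ [y] <+: l ∧ p.filter P = q := by
  obtain ⟨r, hr⟩ := h
  rw [List.append_assoc, List.singleton_append] at hr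
  obtain ⟨l₁, l₂, rfl, h₁, h₂⟩ := List.filter_eq_append_iff.mp hr.symm
  obtain ⟨m₁, m₂, rfl, hm₁, -, -⟩ := List.filter_eq_cons_iff.mp h₂
  refine ⟨l₁ ++ m₁, ⟨m₂, by simp⟩, ?_⟩
  rw [List.filter_append, h₁, List.filter_eq_nil_iff.mpr hm₁, List.append_nil]

theorem List.toFinset_inter_eq_toFinset_filter {α : Type*} [DecidableEq α] (l : List α)
    (s : Finset α) :
    l.toFinset ∩ s = (l.filter (· ∈ s)).toFinset := by
  simp [Finset.filter_mem_eq_inter]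

theorem List.exists_take_getElem_of_prefix {α : Type*} {p l : List α} {u : α}
    (h : p ++ [u] <+: l) : ∃ hp : p.length < l.length, l.take p.length = p ∧ l[p.length] = u := by
  obtain ⟨t, rfl⟩ := h
  simp

section GreedyRun

variable {ι F : Type*} [DecidableEq F]

/-- A complete greedy run from the empty learned set, with scores `φ` and threshold `θ`:
`p ++ [u] <+: us` means that `u` is learned right after the features of `p`. -/
structure IsGreedyRun (S : Finset F) (φ : F → Finset F → ℝ) (θ : ℝ) (us : List F) : Prop where
  mem : ∀ p u, p ++ [u] <+: us → u ∈ S \ p.toFinset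
  maximal : ∀ p u, p ++ [u] <+: us → ∀ v ∈ S \ p.toFinset, φ v p.toFinset ≤ φ u p.toFinset
  threshold : ∀ p u, p ++ [u] <+: us → θ ≤ φ u p.toFinset
  stopped : ∀ v ∈ S \ us.toFinset, φ v us.toFinset < θ

variable {S : Finset F} {Sc : ι → Finset F} {φ : F → Finset F → ℝ} {θa θb : ℝ} {a b : List F}

theorem IsGreedyRun.filter_prefix
    (hloc : ∀ c, ∀ v ∈ Sc c, ∀ L L' : Finset F, L ∩ Sc c = L' ∩ Sc c → φ v L = φ v L')
    (hinj : ∀ L ⊆ S, ∀ c, ∀ v₁ ∈ Sc c, ∀ v₂ ∈ Sc c, φ v₁ L = φ v₂ L → v₁ = v₂)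
    (hθ : θb ≤ θa) (ha : IsGreedyRun S φ θa a) (hb : IsGreedyRun S φ θb b) (c : ι) :
    a.filter (· ∈ Sc c) <+: b.filter (· ∈ Sc c) := by
  refine List.prefix_of_forall_append_singleton fun q y hqy hq => ?_
  obtain ⟨pa, hpa, rfl⟩ := List.exists_prefix_filter_eq _ hqy
  have hy : y ∈ Sc c := by
    simpa using (List.mem_filter.mp (hqy.subset (by simp))).2
  obtain ⟨hyS, hypa⟩ := mem_sdiff.mp (ha.mem pa y hpa)
  obtain ⟨_ | ⟨z, t⟩, ht⟩ := hq
  -- `b` learns no further feature of class `c`, so `y` still clears `θb` when `b` stops.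
  · have hab : pa.toFinset ∩ Sc c = b.toFinset ∩ Sc c := by
      rw [List.toFinset_inter_eq_toFinset_filter, List.toFinset_inter_eq_toFinset_filter, ← ht,
        List.append_nil]
    have hyb : y ∉ b.toFinset := fun h => hypa (mem_inter.mp (hab ▸ mem_inter.mpr ⟨h, hy⟩)).1
    have := hb.stopped y (mem_sdiff.mpr ⟨hyS, hyb⟩)
    linarith [ha.threshold pa y hpa, hloc c y hy _ _ hab]
  -- Both runs pick the unique `φ`-maximiser of class `c` given the same class-`c` features.
  · have hz : pa.filter (· ∈ Sc c) ++ [z] <+: b.filter (· ∈ Sc c) := ⟨t, by simp [← ht]⟩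
    obtain ⟨pb, hpb, hpbq⟩ := List.exists_prefix_filter_eq _ hz
    have hzc : z ∈ Sc c := by
      simpa using (List.mem_filter.mp (hz.subset (by simp))).2
    obtain ⟨hzS, hzpb⟩ := mem_sdiff.mp (hb.mem pb z hpb)
    have hab : pa.toFinset ∩ Sc c = pb.toFinset ∩ Sc c := by
      rw [List.toFinset_inter_eq_toFinset_filter, List.toFinset_inter_eq_toFinset_filter,
        hpbq]
    have hypb : y ∉ pb.toFinset := fun h => hypa (mem_inter.mp (hab ▸ mem_inter.mpr ⟨h, hy⟩)).1
    have hzpa : z ∉ pa.toFinset := fun h => hzpb (mem_inter.mp (hab ▸ mem_inter.mpr ⟨h, hzc⟩)).1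
    have hpbS : pb.toFinset ⊆ S := fun w hw => by
      obtain ⟨s, t, rfl⟩ := List.append_of_mem (List.mem_toFinset.mp hw)
      exact (mem_sdiff.mp (hb.mem s w (List.IsPrefix.trans ⟨t ++ [z], by simp⟩ hpb))).1
    have hyz : y = z := hinj _ hpbS c y hy z hzc (le_antisymm
      (hb.maximal pb z hpb y (mem_sdiff.mpr ⟨hyS, hypb⟩)) (by
        rw [← hloc c y hy _ _ hab, ← hloc c z hzc _ _ hab]
        exact ha.maximal pa y hpa z (mem_sdiff.mpr ⟨hzS, hzpa⟩)))
    exact hyz ▸ hz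

theorem IsGreedyRun.toFinset_subset (hS : ∀ v ∈ S, ∃ c, v ∈ Sc c)
    (hloc : ∀ c, ∀ v ∈ Sc c, ∀ L L' : Finset F, L ∩ Sc c = L' ∩ Sc c → φ v L = φ v L')
    (hinj : ∀ L ⊆ S, ∀ c, ∀ v₁ ∈ Sc c, ∀ v₂ ∈ Sc c, φ v₁ L = φ v₂ L → v₁ = v₂)
    (hθ : θb ≤ θa) (ha : IsGreedyRun S φ θa a) (hb : IsGreedyRun S φ θb b) :
    a.toFinset ⊆ b.toFinset := by
  intro x hx
  obtain ⟨p, s, hps⟩ := List.append_of_mem (List.mem_toFinset.mp hx)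
  obtain ⟨c, hxc⟩ := hS x (mem_sdiff.mp (ha.mem p x ⟨s, by simp [hps]⟩)).1
  have hxb := (ha.filter_prefix hloc hinj hθ hb c).subset
    (List.mem_filter.mpr ⟨List.mem_toFinset.mp hx, by simpa using hxc⟩)
  exact List.mem_toFinset.mpr (List.mem_filter.mp hxb).1

end GreedyRun

section Features

variable {C τ n : ℕ} {F : Type} {Sc : Fin C → Finset F} {nA : Fin C → Finset F → ℕ}

theorem subset_of_mem_of_disjoint (hdisj : ∀ c c', c ≠ c' → Disjoint (Sc c) (Sc c'))
    {c c' : Fin C} {v : F} {A : Finset F} (hv : v ∈ Sc c) (hA : A ⊆ Sc c') (hvA : v ∈ A) :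
    A ⊆ Sc c := by
  obtain rfl : c' = c := by
    by_contra hne
    exact disjoint_left.mp (hdisj c' c hne) (hA hvA) hv
  exact hA

variable [DecidableEq F]

theorem inter_eq_inter_inter_of_subset {A B : Finset F} (hA : A ⊆ B) (L : Finset F) :
    A ∩ L = A ∩ (L ∩ B) := by
  rw [inter_comm L, ← inter_assoc, inter_eq_left.mpr hA]

theorem hval_congr_inter (hdisj : ∀ c c', c ≠ c' → Disjoint (Sc c) (Sc c')) (c : Fin C)
    (v : F) (hv : v ∈ Sc c) (L L' : Finset F) (hLL' : L ∩ Sc c = L' ∩ Sc c) :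
    hval C Sc nA τ n v L = hval C Sc nA τ n v L' := by
  rw [hval_eq_cellCount_div, hval_eq_cellCount_div,
    cellCount_congr (q := fun _ A => v ∈ A ∧ (A ∩ L').card < τ) fun c' A hA => ?_]
  refine and_congr_right fun hvA => ?_
  have hAc := subset_of_mem_of_disjoint hdisj hv hA hvA
  rw [inter_eq_inter_inter_of_subset hAc L, inter_eq_inter_inter_of_subset hAc L', hLL']

theorem hval_eq_hval_empty (hdisj : ∀ c c', c ≠ c' → Disjoint (Sc c) (Sc c')) {c : Fin C}
    {v : F} (hv : v ∈ Sc c) {L : Finset F} (hL : (L ∩ Sc c).card < τ) :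
    hval C Sc nA τ n v L = hval C Sc nA τ n v ∅ := by
  rw [hval_eq_cellCount_div, hval_eq_cellCount_div,
    cellCount_congr (q := fun _ A => v ∈ A ∧ (A ∩ ∅).card < τ) fun c' A hA => ?_]
  refine and_congr_right fun hvA => ?_
  simp only [inter_empty, card_empty, iff_true_intro (pos_of_gt hL)]
  rw [inter_eq_inter_inter_of_subset (subset_of_mem_of_disjoint hdisj hv hA hvA) L]
  exact iff_true_intro ((card_le_card inter_subset_right).trans_lt hL)

theorem cellCount_singleton_pos (hnA : ∀ c, ∀ A ∈ (Sc c).powerset, 1 ≤ nA c A) (hτ : 0 < τ)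
    {c : Fin C} {v : F} (hv : v ∈ Sc c) {L : Finset F} (hvL : v ∉ L) :
    0 < cellCount Sc nA (fun _ A => v ∈ A ∧ (A ∩ L).card < τ) := by
  simpa [cellCount] using cellCount_lt_cellCount (p := fun _ _ => False) hnA (by simp)
    ⟨c, {v}, by simpa using hv, by simp [hvL, hτ], id⟩

end Features

section Runs

variable {C n τ : ℕ} {F X : Type} [DecidableEq F] [DecidableEq X] {S : Finset F}
  {feats : X → Finset F} {γ : ℝ}

theorem IsRun.eq_nil {T M : Finset X} {L : Finset F} {us : List F}
    (h : IsRun S feats τ γ T M L us)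
    (hlow : ∀ u ∈ S \ L, gval feats T (active feats τ L M T) u < γ / T.card) : us = [] := by
  cases us with
  | nil => rfl
  | cons u t =>
    have hL : learnedAfter L (u :: t) 0 = L := by simp [learnedAfter]
    have hu := h.mem 0 (by simp)
    have hthr := h.threshold 0 (by simp)
    rw [hL] at hu hthr
    exact absurd hthr (not_le.mpr (hlow _ hu))

theorem IsRun.isGreedyRun_hval {Sc : Fin C → Finset F} {label : X → Fin C}
    {nA : Fin C → Finset F → ℕ} {chunk : ℕ → Finset X}
    (hD : IsExpandingDataset Sc label feats nA chunk n) {J : ℕ} (hJ : 1 ≤ J) {us : List F}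
    (h : IsRun S feats τ γ (cumT chunk J) ∅ ∅ us) :
    IsGreedyRun S (hval C Sc nA τ n) (γ / (J * n)) us := by
  have hla : ∀ i, learnedAfter ∅ us i = (us.take i).toFinset := by simp [learnedAfter]
  have hcard : ((cumT chunk J).card : ℝ) = J * n := by
    rw [hD.card_cumT]
    push_cast
    rfl
  have hg := hD.gval_active_cumT (τ := τ) hJ
  refine ⟨fun p u hpu => ?_, fun p u hpu => ?_, fun p u hpu => ?_, fun v hv => ?_⟩
  · obtain ⟨hi, htake, hget⟩ := List.exists_take_getElem_of_prefix hpu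
    simpa [hla, htake, hget] using h.mem _ hi
  · obtain ⟨hi, htake, hget⟩ := List.exists_take_getElem_of_prefix hpu
    simpa [hla, htake, hget, hg] using h.maximal _ hi
  · obtain ⟨hi, htake, hget⟩ := List.exists_take_getElem_of_prefix hpu
    simpa [hla, htake, hget, hg, hcard] using h.threshold _ hi
  · simpa [hla, hg, hcard] using h.stopped v (by simpa [hla] using hv)

end Runs

section Warm

variable {C n τ : ℕ} {F X : Type} [DecidableEq F] [DecidableEq X] {S : Finset F}
  {Sc : Fin C → Finset F} {label : X → Fin C} {feats : X → Finset F}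
  {nA : Fin C → Finset F → ℕ} {chunk : ℕ → Finset X} {γ : ℝ}

theorem active_filter_cumT (hD : IsExpandingDataset Sc label feats nA chunk n) (L : Finset F)
    (j : ℕ) :
    active feats τ L ((cumT chunk j).filter fun x => (feats x ∩ L).card < τ)
        (cumT chunk (j + 1)) =
      (chunk (j + 1)).filter fun x => (feats x ∩ L).card < τ := by
  ext x
  simp only [active, mem_filter, mem_sdiff, cumT_succ, mem_union]
  have := @disjoint_left.mp (hD.disjoint_cumT j) x
  tauto

theorem warm_state_eq (hD : IsExpandingDataset Sc label feats nA chunk n) (hn : 0 < n)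
    {Lw : ℕ → Finset F} {Mw : ℕ → Finset X} {usw : ℕ → List F}
    (hLw0 : Lw 0 = ∅) (hMw0 : Mw 0 = ∅)
    (hwarm : ∀ j : ℕ,
      IsRun S feats τ γ (cumT chunk (j + 1)) (Mw j) (Lw j) (usw (j + 1)) ∧
      Lw (j + 1) = Lw j ∪ (usw (j + 1)).toFinset ∧
      Mw (j + 1) = finalM feats τ (cumT chunk (j + 1)) (Mw j) (Lw j) (usw (j + 1)))
    (hstop : ∀ u ∈ S \ Lw 1, hval C Sc nA τ n u (Lw 1) < γ / n) {j : ℕ} (hj : 1 ≤ j) :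
    Lw j = Lw 1 ∧ Mw j = (cumT chunk j).filter fun x => (feats x ∩ Lw 1).card < τ := by
  induction j, hj using Nat.le_induction with
  | base =>
    obtain ⟨-, hL, hM⟩ := hwarm 0
    refine ⟨rfl, ?_⟩
    rw [hM, finalM, active, hMw0, hLw0, hL, hLw0]
    simp
  | succ j hj ih =>
    obtain ⟨hrun, hL, hM⟩ := hwarm j
    rw [ih.2, ih.1] at hrun hM
    rw [ih.1] at hL
    have hnil : usw (j + 1) = [] := hrun.eq_nil fun u hu => by
      have hlt := hstop u hu
      rw [hval_eq_cellCount_div, div_lt_div_iff_of_pos_right (by positivity)] at hlt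
      rw [active_filter_cumT hD, gval, hD.featCount_filter_chunk (by omega), hD.card_cumT]
      exact div_lt_div_of_pos_right hlt (by positivity)
    rw [hnil] at hL hM
    refine ⟨by simpa using hL, ?_⟩
    rw [hM, finalM, List.toFinset_nil, union_empty, active_filter_cumT hD, cumT_succ,
      filter_union]

end Warm

section Flip

variable {C τ n : ℕ} {F : Type} [DecidableEq F] {Sc : Fin C → Finset F}
  {nA : Fin C → Finset F → ℕ} {G L : Finset F}

theorem exists_cell_newly_classified_of_le_card {c : Fin C} {v : F} (hvL : v ∈ L)
    (hvc : v ∈ Sc c) (hvG : v ∉ G) (hτ : 0 < τ) (hcard : τ ≤ (L ∩ Sc c).card) :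
    ∃ c, ∃ A ⊆ Sc c, (A ∩ G).card < τ ∧ ¬(A ∩ L).card < τ := by
  obtain ⟨B, hB, hBcard⟩ := exists_subset_card_eq (s := (L ∩ Sc c).erase v) (n := τ - 1)
    (by rw [card_erase_of_mem (mem_inter.mpr ⟨hvL, hvc⟩)]; omega)
  have hBL : B ⊆ L ∩ Sc c := hB.trans (erase_subset _ _)
  have hvB : v ∉ B := fun h => notMem_erase v _ (hB h)
  refine ⟨c, insert v B, insert_subset hvc (hBL.trans inter_subset_right), ?_, ?_⟩
  · calc (insert v B ∩ G).card ≤ B.card := by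
          rw [insert_inter_of_notMem hvG]
          exact card_le_card inter_subset_left
      _ < τ := by omega
  · rw [inter_eq_left.mpr (insert_subset hvL (hBL.trans inter_subset_left)),
      card_insert_of_notMem hvB]
    omega

theorem exists_cell_newly_classified (hdisj : ∀ c c', c ≠ c' → Disjoint (Sc c) (Sc c'))
    (hτ : 0 < τ) (hGL : G ⊆ L) {c : Fin C} {v : F} (hvc : v ∈ Sc c) (hvG : v ∉ G) {θ : ℝ}
    {R : Finset F} (hR : R ⊆ Sc c) (hRcard : R.card = τ - 1)
    (hRθ : ∀ r ∈ R, θ ≤ hval C Sc nA τ n r ∅)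
    (hGstop : ∀ u ∈ Sc c \ G, hval C Sc nA τ n u G < θ)
    (hLstop : ∀ u ∈ Sc c \ L, hval C Sc nA τ n u L < hval C Sc nA τ n v G) :
    ∃ c, ∃ A ⊆ Sc c, (A ∩ G).card < τ ∧ ¬(A ∩ L).card < τ := by
  by_contra! hno
  have hmono : hval C Sc nA τ n v G ≤ hval C Sc nA τ n v L := by
    rw [hval_eq_cellCount_div, hval_eq_cellCount_div]
    gcongr
    exact cellCount_le_cellCount fun c A hA h => ⟨h.1, hno c A hA h.2⟩
  have hvL : v ∈ L := by
    by_contra hvL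
    exact (hLstop v (mem_sdiff.mpr ⟨hvc, hvL⟩)).not_ge hmono
  have hsmall : (L ∩ Sc c).card < τ := by
    by_contra! hbig
    obtain ⟨c', A, hA, hAG, hAL⟩ :=
      exists_cell_newly_classified_of_le_card hvL hvc hvG hτ hbig
    exact hAL (hno c' A hA hAG)
  -- With fewer than `τ` class-`c` features learned, the scores of class `c` are those at `∅`,
  -- so the frequent features `R` are all learned in `G`; with `v` they give `τ` features in `L`.
  have hRG : R ⊆ G := fun r hr => by
    by_contra hrG
    have hsmallG : (G ∩ Sc c).card < τ :=
      (card_le_card (inter_subset_inter_right hGL)).trans_lt hsmall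
    have := hGstop r (mem_sdiff.mpr ⟨hR hr, hrG⟩)
    rw [hval_eq_hval_empty hdisj (hR hr) hsmallG] at this
    exact this.not_ge (hRθ r hr)
  have hvR : v ∉ R := fun h => hvG (hRG h)
  have := card_le_card (insert_subset (mem_inter.mpr ⟨hvL, hvc⟩)
    (subset_inter (hRG.trans hGL) hR))
  rw [card_insert_of_notMem hvR] at this
  omega

theorem ACC_lt_ACC (hC : 1 < C) (hn : 0 < n) (hnA : ∀ c, ∀ A ∈ (Sc c).powerset, 1 ≤ nA c A)
    (hGL : G ⊆ L) (hnew : ∃ c, ∃ A ⊆ Sc c, (A ∩ G).card < τ ∧ ¬(A ∩ L).card < τ) :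
    ACC C Sc nA τ n G < ACC C Sc nA τ n L := by
  have hcount := cellCount_lt_cellCount hnA
    (fun c A _ h => (card_le_card (inter_subset_inter_left hGL)).trans_lt h) hnew
  rw [ACC_eq_cellCount_div, ACC_eq_cellCount_div]
  have hC' : (1 : ℝ) < C := by exact_mod_cast hC
  gcongr

end Flip

theorem cold_threshold_bounds {γ δ N : ℝ} {J : ℕ} (hγ : 0 < γ) (hN : 0 < N) (hδ : 0 < δ)
    (hJ : γ / (δ * N) < J) :
    1 ≤ J ∧ γ / (J * N) ≤ γ / N ∧ γ / (J * N) < δ := by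
  have hJ0 : (0 : ℝ) < J := (div_pos hγ (by positivity)).trans hJ
  have hJ1 : 1 ≤ J := by exact_mod_cast hJ0
  refine ⟨hJ1, div_le_div_of_nonneg_left hγ.le hN
    (le_mul_of_one_le_left hN.le (by exact_mod_cast hJ1)), ?_⟩
  rw [div_lt_iff₀ (by positivity)]
  rw [div_lt_iff₀ (by positivity)] at hJ
  linarith

theorem warm_acc_lt_cold_acc_general
    {F X : Type} [DecidableEq F] [DecidableEq X]
    (C τ : ℕ) (γ : ℝ) (n : ℕ)
    (Sc : Fin C → Finset F) (label : X → Fin C) (feats : X → Finset F)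
    (nA : Fin C → Finset F → ℕ) (chunk : ℕ → Finset X)
    (hγ : 0 < γ)
    (hdisjS : ∀ c c', c ≠ c' → Disjoint (Sc c) (Sc c'))
    (hfeats : ∀ x, feats x ⊆ Sc (label x))
    (hnA : ∀ c, ∀ A ∈ (Sc c).powerset, 1 ≤ nA c A)
    (hchunkdisj : ∀ j j', j ≠ j' → Disjoint (chunk j) (chunk j'))
    (hchunkcard : ∀ j, 1 ≤ j → (chunk j).card = n)
    (hcount : ∀ j, 1 ≤ j → ∀ c : Fin C, ∀ A ∈ (Sc c).powerset,
      ((chunk j).filter fun x => label x = c ∧ feats x = A).card = nA c A)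
    (hC : 1 < C) (hτpos : 0 < τ)
    (hinj : ∀ L : Finset F, L ⊆ Finset.univ.biUnion Sc →
      ∀ c : Fin C, ∀ v₁ ∈ Sc c, ∀ v₂ ∈ Sc c,
        hval C Sc nA τ n v₁ L = hval C Sc nA τ n v₂ L → v₁ = v₂)
    (hii : ∀ c : Fin C, ∃ v : Fin τ → F, Function.Injective v ∧ (∀ i, v i ∈ Sc c) ∧
      ∀ j, 1 ≤ j →
        ((∀ i : Fin τ, (i : ℕ) + 1 < τ →
            γ / (n : ℝ) ≤ gval feats (chunk j) (chunk j) (v i)) ∧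
          gval feats (chunk j) (chunk j)
            (v ⟨τ - 1, Nat.sub_lt hτpos Nat.one_pos⟩) < γ / (n : ℝ)))
    (Lw : ℕ → Finset F) (Mw : ℕ → Finset X) (usw : ℕ → List F)
    (hLw0 : Lw 0 = ∅) (hMw0 : Mw 0 = ∅)
    (hwarm : ∀ j : ℕ,
      IsRun (Finset.univ.biUnion Sc) feats τ γ (cumT chunk (j + 1)) (Mw j) (Lw j)
        (usw (j + 1)) ∧
      Lw (j + 1) = Lw j ∪ (usw (j + 1)).toFinset ∧
      Mw (j + 1) = finalM feats τ (cumT chunk (j + 1)) (Mw j) (Lw j) (usw (j + 1)))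
    (usc : ℕ → List F)
    (hcold : ∀ j : ℕ,
      IsRun (Finset.univ.biUnion Sc) feats τ γ (cumT chunk (j + 1)) ∅ ∅ (usc (j + 1)))
    (δ : ℝ)
    (hδmem : ∃ v ∈ Finset.univ.biUnion Sc \ Lw 1, hval C Sc nA τ n v (Lw 1) = δ) :
    0 < δ ∧
    ∀ J : ℕ, γ / (δ * (n : ℝ)) < (J : ℝ) →
      ACC C Sc nA τ n (Lw J) < ACC C Sc nA τ n ((usc J).toFinset) := by
  set S := univ.biUnion Sc
  have hD : IsExpandingDataset Sc label feats nA chunk n :=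
    ⟨hfeats, hchunkdisj, hchunkcard, hcount⟩
  have hG : Lw 1 = (usw 1).toFinset := by simpa [hLw0] using (hwarm 0).2.1
  have hrun₁ : IsGreedyRun S (hval C Sc nA τ n) (γ / n) (usw 1) := by
    have h₁ := (hwarm 0).1
    rw [hLw0, hMw0] at h₁
    simpa using h₁.isGreedyRun_hval hD le_rfl
  have hGstop : ∀ u ∈ S \ Lw 1, hval C Sc nA τ n u (Lw 1) < γ / n := hG ▸ hrun₁.stopped
  obtain ⟨v₀, hv₀, rfl⟩ := hδmem
  obtain ⟨c₀, -, hv₀c⟩ := mem_biUnion.mp (mem_sdiff.mp hv₀).1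
  have hcount₀ := cellCount_singleton_pos hnA hτpos hv₀c (mem_sdiff.mp hv₀).2
  have hnpos : 0 < n := hcount₀.trans_le (hD.cellCount_le _)
  have hδ : 0 < hval C Sc nA τ n v₀ (Lw 1) := by
    rw [hval_eq_cellCount_div]
    positivity
  refine ⟨hδ, fun J hJ => ?_⟩
  obtain ⟨hJ1, hθJ, hθ⟩ := cold_threshold_bounds hγ (by positivity) hδ hJ
  have hrunJ : IsGreedyRun S (hval C Sc nA τ n) (γ / (J * n)) (usc J) := by
    have hJ := hcold (J - 1)
    rw [Nat.sub_add_cancel hJ1] at hJ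
    exact hJ.isGreedyRun_hval hD hJ1
  have hGL : Lw 1 ⊆ (usc J).toFinset :=
    hG ▸ hrun₁.toFinset_subset (by simp [S]) (hval_congr_inter hdisjS) hinj hθJ hrunJ
  obtain ⟨v, hvinj, hvc, hvθ⟩ := hii c₀
  obtain ⟨R, hR, hRcard, hRθ⟩ :=
    hD.exists_frequent_features hτpos hvinj hvc (hvθ 1 le_rfl).1
  have hsub : Sc c₀ ⊆ S := subset_biUnion_of_mem Sc (mem_univ c₀)
  rw [(warm_state_eq hD hnpos hLw0 hMw0 hwarm hGstop hJ1).1]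
  exact ACC_lt_ACC hC hnpos hnA hGL <| exists_cell_newly_classified hdisjS hτpos hGL hv₀c
    (mem_sdiff.mp hv₀).2 hR hRcard hRθ (fun u hu => hGstop u (sdiff_subset_sdiff hsub le_rfl hu))
    fun u hu => (hrunJ.stopped u (sdiff_subset_sdiff hsub le_rfl hu)).trans hθ

/-- Theorem 3.4, strict accuracy part: with
`G = L_warm^(1)` and `δ = max_{v ∈ S ∖ G} h(v; G)`, we have `δ > 0`, and for
every `J > γ/(δ·n)` the warm-started model has strictly smaller test accuracy
than the cold-started one. -/
theorem warm_acc_lt_cold_acc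
    {F X : Type} [DecidableEq F] [DecidableEq X]
    (C K τ : ℕ) (γ : ℝ) (n : ℕ)
    (Sc : Fin C → Finset F) (label : X → Fin C) (feats : X → Finset F)
    (nA : Fin C → Finset F → ℕ) (chunk : ℕ → Finset X)
    (hγ : 0 < γ) (hτK : τ < K)
    (hK : ∀ c, (Sc c).card = K)
    (hdisjS : ∀ c c', c ≠ c' → Disjoint (Sc c) (Sc c'))
    (hfeats : ∀ x, feats x ⊆ Sc (label x))
    (hnA : ∀ c, ∀ A ∈ (Sc c).powerset, 1 ≤ nA c A)
    (hn : n = ∑ c : Fin C, ∑ A ∈ (Sc c).powerset, nA c A)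
    (hchunkdisj : ∀ j j', j ≠ j' → Disjoint (chunk j) (chunk j'))
    (hchunkcard : ∀ j, 1 ≤ j → (chunk j).card = n)
    (hcount : ∀ j, 1 ≤ j → ∀ c : Fin C, ∀ A ∈ (Sc c).powerset,
      ((chunk j).filter fun x => label x = c ∧ feats x = A).card = nA c A)
    (hC : 1 < C) (hτpos : 0 < τ)
    (hinj : ∀ L : Finset F, L ⊆ Finset.univ.biUnion Sc →
      ∀ c : Fin C, ∀ v₁ ∈ Sc c, ∀ v₂ ∈ Sc c,
        hval C Sc nA τ n v₁ L = hval C Sc nA τ n v₂ L → v₁ = v₂)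
    (hii : ∀ c : Fin C, ∃ v : Fin τ → F, Function.Injective v ∧ (∀ i, v i ∈ Sc c) ∧
      ∀ j, 1 ≤ j →
        ((∀ i : Fin τ, (i : ℕ) + 1 < τ →
            γ / (n : ℝ) ≤ gval feats (chunk j) (chunk j) (v i)) ∧
          gval feats (chunk j) (chunk j)
            (v ⟨τ - 1, Nat.sub_lt hτpos Nat.one_pos⟩) < γ / (n : ℝ)))
    (Lw : ℕ → Finset F) (Mw : ℕ → Finset X) (usw : ℕ → List F)
    (hLw0 : Lw 0 = ∅) (hMw0 : Mw 0 = ∅)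
    (hwarm : ∀ j : ℕ,
      IsRun (Finset.univ.biUnion Sc) feats τ γ (cumT chunk (j + 1)) (Mw j) (Lw j)
        (usw (j + 1)) ∧
      Lw (j + 1) = Lw j ∪ (usw (j + 1)).toFinset ∧
      Mw (j + 1) = finalM feats τ (cumT chunk (j + 1)) (Mw j) (Lw j) (usw (j + 1)))
    (usc : ℕ → List F)
    (hcold : ∀ j : ℕ,
      IsRun (Finset.univ.biUnion Sc) feats τ γ (cumT chunk (j + 1)) ∅ ∅ (usc (j + 1)))
    (δ : ℝ)
    (hδub : ∀ v ∈ Finset.univ.biUnion Sc \ Lw 1, hval C Sc nA τ n v (Lw 1) ≤ δ)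
    (hδmem : ∃ v ∈ Finset.univ.biUnion Sc \ Lw 1, hval C Sc nA τ n v (Lw 1) = δ) :
    0 < δ ∧
    ∀ J : ℕ, γ / (δ * (n : ℝ)) < (J : ℝ) →
      ACC C Sc nA τ n (Lw J) < ACC C Sc nA τ n ((usc J).toFinset) :=
  warm_acc_lt_cold_acc_general C τ γ n Sc label feats nA chunk hγ hdisjS hfeats hnA hchunkdisj
    hchunkcard hcount hC hτpos hinj hii Lw Mw usw hLw0 hMw0 hwarm usc hcold δ hδmem
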